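/- arXiv:1002.1878 — 3 statements merged into one kernel-verified Lean document; each statement's English description precedes it below -/
import Mathlib

section
/- For any a, b ∈ ℕ, the range R_n of a random walk satisfies ℙ(R_n ≥ a + b) ≤ ℙ(R_n ≥ a) · ℙ(R_n ≥ b). -/
/-!
Let `τ` be the first time the range reaches `a`; since the range starts at `0` and grows by at
most one per step, `R τ = a`. On `{a + b ≤ R n}` we have `τ ≤ n`, and as `R n` is at most `R τ`
plus the range of the walk restarted at `τ`, the restarted walk visits at least `b` sites in `n`
steps. The event `{τ = j}` depends only on the first `j` steps, the restarted range only on the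
later ones, and the latter has the law of `R n`; summing over `j ≤ n` gives the bound.
-/

open MeasureTheory ProbabilityTheory Finset

section Deterministic

variable {G : Type*} [AddCommMonoid G] [DecidableEq G]

def walkRange (u : ℕ → G) (n : ℕ) : ℕ :=
  #((range n).image fun k => ∑ i ∈ range k, u i)

lemma walkRange_zero (u : ℕ → G) : walkRange u 0 = 0 := by
  simp [walkRange]

lemma walkRange_congr {u v : ℕ → G} {n : ℕ} (h : ∀ i < n, u i = v i) :
    walkRange u n = walkRange v n := by
  refine congrArg card (image_congr fun k hk => sum_congr rfl fun i hi => h i ?_)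
  exact (mem_range.1 hi).trans (mem_range.1 hk)

lemma walkRange_mono (u : ℕ → G) : Monotone (walkRange u) :=
  fun _ _ h => card_le_card (image_subset_image (range_subset_range.2 h))

lemma walkRange_succ_le (u : ℕ → G) (n : ℕ) : walkRange u (n + 1) ≤ walkRange u n + 1 := by
  rw [walkRange, range_add_one, image_insert]
  exact card_insert_le _ _

/-- Every position `S k` with `j ≤ k < n` is `S j` plus a position of the walk restarted at `j`. -/
lemma walkRange_le_add_walkRange_shift (u : ℕ → G) (j n : ℕ) :
    walkRange u n ≤ walkRange u j + walkRange (fun i => u (j + i)) n := by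
  set S : ℕ → G := fun k => ∑ i ∈ range k, u i
  set S' : ℕ → G := fun k => ∑ i ∈ range k, u (j + i)
  have hsub : (range n).image S ⊆ (range j).image S ∪ ((range n).image S').image (S j + ·) := by
    intro x hx
    obtain ⟨k, hk, rfl⟩ := mem_image.1 hx
    rcases lt_or_ge k j with hkj | hjk
    · exact mem_union_left _ (mem_image_of_mem S (mem_range.2 hkj))
    · obtain ⟨m, rfl⟩ := Nat.exists_eq_add_of_le hjk
      refine mem_union_right _ (mem_image.2 ⟨S' m, mem_image_of_mem S' ?_, ?_⟩)
      · exact mem_range.2 (by have := mem_range.1 hk; omega)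
      · exact (sum_range_add u j m).symm
  calc walkRange u n ≤ #((range j).image S ∪ ((range n).image S').image (S j + ·)) :=
        card_le_card hsub
    _ ≤ walkRange u j + #(((range n).image S').image (S j + ·)) := card_union_le _ _
    _ ≤ walkRange u j + walkRange (fun i => u (j + i)) n := by
        gcongr; exact card_image_le

def IsRangeHittingTime (u : ℕ → G) (a j : ℕ) : Prop :=
  walkRange u j = a ∧ ∀ i < j, walkRange u i < a

lemma exists_isRangeHittingTime {u : ℕ → G} {a n : ℕ} (h : a ≤ walkRange u n) :
    ∃ j ≤ n, IsRangeHittingTime u a j := by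
  classical
  have hex : ∃ j, a ≤ walkRange u j := ⟨n, h⟩
  refine ⟨Nat.find hex, Nat.find_min' hex h, le_antisymm ?_ (Nat.find_spec hex),
    fun i hi => not_le.1 (Nat.find_min hex hi)⟩
  rcases hj : Nat.find hex with _ | i
  · exact (walkRange_zero u).trans_le (Nat.zero_le a)
  · have hi : walkRange u i < a := not_le.1 (Nat.find_min hex (by omega))
    have := walkRange_succ_le u i
    omega

lemma IsRangeHittingTime.unique {u : ℕ → G} {a j k : ℕ} (hj : IsRangeHittingTime u a j)
    (hk : IsRangeHittingTime u a k) : j = k := by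
  by_contra hne
  rcases Nat.lt_or_gt_of_ne hne with h | h
  · exact (hk.2 j h).ne hj.1
  · exact (hj.2 k h).ne hk.1

lemma IsRangeHittingTime.le_walkRange {u : ℕ → G} {a j n : ℕ} (hj : IsRangeHittingTime u a j)
    (hjn : j ≤ n) : a ≤ walkRange u n :=
  hj.1 ▸ walkRange_mono u hjn

lemma IsRangeHittingTime.le_walkRange_shift {u : ℕ → G} {a b j n : ℕ}
    (hj : IsRangeHittingTime u a j) (h : a + b ≤ walkRange u n) :
    b ≤ walkRange (fun i => u (j + i)) n := by
  have := walkRange_le_add_walkRange_shift u j n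
  rw [hj.1] at this
  omega

end Deterministic

section Probability

variable {Ω G : Type*} {mΩ : MeasurableSpace Ω} {μ : Measure Ω} [MeasurableSpace G]

/-- Both paths have the law `ν^⊗ℕ`, where `ν` is the common law of the steps. -/
lemma identDistrib_shift {X : ℕ → Ω → G} (hmeas : ∀ i, Measurable (X i)) (hindep : iIndepFun X μ)
    (hident : ∀ i, IdentDistrib (X i) (X 0) μ μ) (j : ℕ) :
    IdentDistrib (fun ω i => X (j + i) ω) (fun ω i => X i ω) μ μ := by
  have hlaw : ∀ j, μ.map (fun ω i => X (j + i) ω) = Measure.infinitePi fun _ => μ.map (X 0) := by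
    intro j
    rw [(hindep.precomp (add_right_injective j)).map_fun_eq_infinitePi_map fun i => hmeas _]
    simp_rw [(hident _).map_eq]
  refine ⟨(measurable_pi_lambda _ fun i => hmeas _).aemeasurable,
    (measurable_pi_lambda _ hmeas).aemeasurable, ?_⟩
  simpa using (hlaw j).trans (hlaw 0).symm

variable [AddCommMonoid G] [DecidableEq G] [Countable G] [MeasurableSingletonClass G]

lemma measurable_walkRange {m : MeasurableSpace Ω} {Y : Ω → ℕ → G} {n : ℕ}
    (hY : ∀ i < n, Measurable[m] fun ω => Y ω i) : Measurable[m] fun ω => walkRange (Y ω) n := by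
  have h : (fun ω => walkRange (Y ω) n) =
      (fun v : Fin n → G => walkRange (Function.extend Fin.val v 0) n) ∘ fun ω i => Y ω i := by
    funext ω
    exact walkRange_congr fun i hi =>
      (Fin.val_injective.extend_apply (fun i : Fin n => Y ω i) 0 ⟨i, hi⟩).symm
  rw [h]
  exact measurable_of_countable _ |>.comp (measurable_pi_lambda _ fun i => hY i i.2)

lemma measurableSet_isRangeHittingTime {m : MeasurableSpace Ω} {Y : Ω → ℕ → G} {a j : ℕ}
    (hY : ∀ i < j, Measurable[m] fun ω => Y ω i) :
    MeasurableSet[m] {ω | IsRangeHittingTime (Y ω) a j} := by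
  simp only [IsRangeHittingTime, Set.ofPred_and, Set.ofPred_forall]
  exact (measurable_walkRange hY (measurableSet_singleton a)).inter <|
    .iInter fun i => .iInter fun hi =>
      measurable_walkRange (fun k hk => hY k (hk.trans hi)) measurableSet_Iio

lemma measure_le_walkRange_shift {X : ℕ → Ω → G} (hmeas : ∀ i, Measurable (X i))
    (hindep : iIndepFun X μ) (hident : ∀ i, IdentDistrib (X i) (X 0) μ μ) (b j n : ℕ) :
    μ {ω | b ≤ walkRange (fun i => X (j + i) ω) n} = μ {ω | b ≤ walkRange (fun i => X i ω) n} :=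
  ((identDistrib_shift hmeas hindep hident j).comp
    (measurable_walkRange fun i _ => measurable_pi_apply i)).measure_mem_eq measurableSet_Ici

lemma measure_isRangeHittingTime_inter {X : ℕ → Ω → G} (hmeas : ∀ i, Measurable (X i))
    (hindep : iIndepFun X μ) (hident : ∀ i, IdentDistrib (X i) (X 0) μ μ) (a b j n : ℕ) :
    μ ({ω | IsRangeHittingTime (fun i => X i ω) a j} ∩
        {ω | b ≤ walkRange (fun i => X (j + i) ω) n}) =
      μ {ω | IsRangeHittingTime (fun i => X i ω) a j} *
        μ {ω | b ≤ walkRange (fun i => X i ω) n} := by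
  let past := ⨆ i ∈ Set.Iio j, MeasurableSpace.comap (X i) ‹MeasurableSpace G›
  let future := ⨆ i ∈ Set.Ici j, MeasurableSpace.comap (X i) ‹MeasurableSpace G›
  have hindep' : Indep past future μ :=
    indep_iSup_of_disjoint (fun i => (hmeas i).comap_le) hindep.iIndep (Set.Iio_disjoint_Ici le_rfl)
  have hpast : MeasurableSet[past] {ω | IsRangeHittingTime (fun i => X i ω) a j} :=
    measurableSet_isRangeHittingTime fun i hi => measurable_iff_comap_le.2 <|
      le_iSup₂ (f := fun k (_ : k ∈ Set.Iio j) => MeasurableSpace.comap (X k) _) i hi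
  have hfuture : MeasurableSet[future] {ω | b ≤ walkRange (fun i => X (j + i) ω) n} :=
    measurable_walkRange (fun i _ => measurable_iff_comap_le.2 <|
      le_iSup₂ (f := fun k (_ : k ∈ Set.Ici j) => MeasurableSpace.comap (X k) _) (j + i)
        (Nat.le_add_right j i)) measurableSet_Ici
  rw [(Indep_iff _ _ _).1 hindep' _ _ hpast hfuture, measure_le_walkRange_shift hmeas hindep hident]

theorem measure_add_le_walkRange_le_mul {X : ℕ → Ω → G} (hmeas : ∀ i, Measurable (X i))
    (hindep : iIndepFun X μ) (hident : ∀ i, IdentDistrib (X i) (X 0) μ μ) (n a b : ℕ) :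
    μ {ω | a + b ≤ walkRange (fun i => X i ω) n} ≤
      μ {ω | a ≤ walkRange (fun i => X i ω) n} * μ {ω | b ≤ walkRange (fun i => X i ω) n} := by
  let H : ℕ → Set Ω := fun j => {ω | IsRangeHittingTime (fun i => X i ω) a j}
  have hcover : {ω | a + b ≤ walkRange (fun i => X i ω) n} ⊆
      ⋃ j ∈ range (n + 1), H j ∩ {ω | b ≤ walkRange (fun i => X (j + i) ω) n} := by
    intro ω hω
    obtain ⟨j, hjn, hj⟩ := exists_isRangeHittingTime (le_of_add_le_left hω)
    exact Set.mem_biUnion (mem_range_succ_iff.2 hjn) ⟨hj, hj.le_walkRange_shift hω⟩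
  have hdisj : (range (n + 1) : Set ℕ).PairwiseDisjoint H := fun j _ k _ hne =>
    Set.disjoint_left.2 fun _ hj hk => hne (IsRangeHittingTime.unique hj hk)
  have hunion : (⋃ j ∈ range (n + 1), H j) ⊆ {ω | a ≤ walkRange (fun i => X i ω) n} :=
    Set.iUnion₂_subset fun j hj _ hω => hω.le_walkRange (mem_range_succ_iff.1 hj)
  calc μ {ω | a + b ≤ walkRange (fun i => X i ω) n}
      ≤ ∑ j ∈ range (n + 1), μ (H j ∩ {ω | b ≤ walkRange (fun i => X (j + i) ω) n}) :=
        (measure_mono hcover).trans (measure_biUnion_finset_le _ _)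
    _ = (∑ j ∈ range (n + 1), μ (H j)) * μ {ω | b ≤ walkRange (fun i => X i ω) n} := by
        rw [sum_mul]
        exact sum_congr rfl fun j _ => measure_isRangeHittingTime_inter hmeas hindep hident a b j n
    _ = μ (⋃ j ∈ range (n + 1), H j) * μ {ω | b ≤ walkRange (fun i => X i ω) n} := by
        rw [measure_biUnion_finset hdisj fun j _ =>
          measurableSet_isRangeHittingTime fun i _ => hmeas i]
    _ ≤ μ {ω | a ≤ walkRange (fun i => X i ω) n} * μ {ω | b ≤ walkRange (fun i => X i ω) n} := by
        gcongr

end Probability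

theorem range_tail_submultiplicative_general
    {Ω : Type*} [MeasurableSpace Ω] (μ : Measure Ω)
    (X : ℕ → Ω → ℤ) (hmeas : ∀ i, Measurable (X i))
    (hindep : iIndepFun X μ)
    (hident : ∀ i, IdentDistrib (X i) (X 0) μ μ)
    (S : ℕ → Ω → ℤ) (hS : ∀ k ω, S k ω = ∑ i ∈ Finset.range k, X i ω)
    (R : ℕ → Ω → ℕ)
    (hR : ∀ n ω, R n ω = ((Finset.range n).image (fun k => S k ω)).card)
    (n : ℕ) (a b : ℕ) :
    μ {ω | a + b ≤ R n ω} ≤ μ {ω | a ≤ R n ω} * μ {ω | b ≤ R n ω} := by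
  obtain rfl : R = fun n ω => walkRange (fun i => X i ω) n := by
    funext n ω
    simp only [hR, hS, walkRange]
  exact measure_add_le_walkRange_le_mul hmeas hindep hident n a b

/-- Submultiplicativity of the tail of the range of a random walk:
`ℙ(R_n ≥ a + b) ≤ ℙ(R_n ≥ a) ⬝ ℙ(R_n ≥ b)`. -/
theorem range_tail_submultiplicative
    {Ω : Type*} [MeasurableSpace Ω] (μ : Measure Ω) [IsProbabilityMeasure μ]
    (X : ℕ → Ω → ℤ) (hmeas : ∀ i, Measurable (X i))
    (hindep : iIndepFun X μ)
    (hident : ∀ i, IdentDistrib (X i) (X 0) μ μ)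
    (S : ℕ → Ω → ℤ) (hS : ∀ k ω, S k ω = ∑ i ∈ Finset.range k, X i ω)
    (R : ℕ → Ω → ℕ)
    (hR : ∀ n ω, R n ω = ((Finset.range n).image (fun k => S k ω)).card)
    (n : ℕ) (a b : ℕ) :
    μ {ω | a + b ≤ R n ω} ≤ μ {ω | a ≤ R n ω} * μ {ω | b ≤ R n ω} :=
  range_tail_submultiplicative_general μ X hmeas hindep hident S hS R hR n a b
end

section
/- For any a, b ∈ ℕ, the maximal local time N_n^* = sup_y N_n(y) of a random walk satisfies ℙ(N_n^* ≥ a + b) ≤ ℙ(N_n^* ≥ a) · ℙ(N_n^* ≥ b). -/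
/-!
Let `τ` be the first time the maximal local time `N*` reaches `a`. Since `N*` grows by unit
steps, `N*_τ = a`, so on `{a + b ≤ N*_n}` subadditivity `N*_n ≤ N*_τ + N*_{n-τ} ∘ θ_τ` forces
the walk restarted at `τ` to have maximal local time at least `b` before time `n`. The event
`{τ = t + 1}` is determined by `X_0, …, X_t`, while the restarted walk is built from
`X_{t+1}, X_{t+2}, …`, is independent of it and has the law of the original walk. Summing over
`t` gives `ℙ(N*_n ≥ a + b) ≤ ∑ₜ ℙ(τ = t + 1) ℙ(N*_n ≥ b) = ℙ(N*_n ≥ a) ℙ(N*_n ≥ b)`.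
-/

open MeasureTheory ProbabilityTheory Finset


section Independence

variable {Ω ι β : Type*} {X : ι → Ω → β} {P Q : (ι → β) → Prop} {I J : Finset ι}

lemma DependsOn.setOf_comp_eq_preimage_image (hP : DependsOn P I) :
    {ω | P (X · ω)} = (fun ω (i : I) => X i ω) ⁻¹' ((fun y (i : I) => y i) '' {y | P y}) := by
  ext ω
  refine ⟨fun h => ⟨_, h, rfl⟩, ?_⟩
  rintro ⟨y, hy, hyX⟩
  exact (hP fun i hi => congrFun hyX ⟨i, hi⟩).mp hy

variable [MeasurableSpace Ω] {μ : Measure Ω} [MeasurableSpace β]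

lemma ProbabilityTheory.iIndepFun.map_comp_eq_map (hindep : iIndepFun X μ)
    (hX : ∀ i, Measurable (X i)) {g : ι → ι} (hg : g.Injective)
    (hident : ∀ i, IdentDistrib (X (g i)) (X i) μ μ) :
    μ.map (fun ω i => X (g i) ω) = μ.map (fun ω i => X i ω) := by
  rw [(hindep.precomp hg).map_fun_eq_infinitePi_map fun i => hX (g i),
    hindep.map_fun_eq_infinitePi_map hX]
  simp_rw [(hident _).map_eq]

variable [Countable β] [MeasurableSingletonClass β]

lemma DependsOn.measurableSet_setOf_comp (hX : ∀ i, Measurable (X i)) (hP : DependsOn P I) :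
    MeasurableSet {ω | P (X · ω)} := by
  rw [hP.setOf_comp_eq_preimage_image]
  exact (measurable_pi_lambda (fun ω (i : I) => X i ω) fun i => hX i) .of_discrete

lemma ProbabilityTheory.iIndepFun.measure_inter_setOf_eq_mul (hindep : iIndepFun X μ)
    (hX : ∀ i, Measurable (X i)) (hP : DependsOn P I) (hQ : DependsOn Q J) (hIJ : Disjoint I J) :
    μ ({ω | P (X · ω)} ∩ {ω | Q (X · ω)}) = μ {ω | P (X · ω)} * μ {ω | Q (X · ω)} := by
  rw [hP.setOf_comp_eq_preimage_image, hQ.setOf_comp_eq_preimage_image]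
  exact (hindep.indepFun_finset I J hIJ hX).measure_inter_preimage_eq_mul _ _
    .of_discrete .of_discrete

lemma ProbabilityTheory.iIndepFun.measure_setOf_comp_eq (hindep : iIndepFun X μ)
    (hX : ∀ i, Measurable (X i)) {g : ι → ι} (hg : g.Injective)
    (hident : ∀ i, IdentDistrib (X (g i)) (X i) μ μ) (hQ : DependsOn Q I) :
    μ {ω | Q fun i => X (g i) ω} = μ {ω | Q (X · ω)} := by
  have hQmeas : MeasurableSet {y | Q y} :=
    hQ.measurableSet_setOf_comp (Ω := ι → β) (X := fun i y => y i) measurable_pi_apply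
  have hmap := congrArg (· {y | Q y}) (hindep.map_comp_eq_map hX hg hident)
  rwa [Measure.map_apply (measurable_pi_lambda _ fun i => hX (g i)) hQmeas,
    Measure.map_apply (measurable_pi_lambda _ hX) hQmeas] at hmap

end Independence

namespace RandomWalk

lemma exists_lt_le_succ_of_le {f : ℕ → ℕ} {a n : ℕ} (h0 : f 0 < a) (hn : a ≤ f n) :
    ∃ t < n, f t < a ∧ a ≤ f (t + 1) := by
  induction n with
  | zero => omega
  | succ n ih =>
    by_cases h : a ≤ f n
    · obtain ⟨t, ht, hft⟩ := ih h
      exact ⟨t, by omega, hft⟩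
    · exact ⟨n, by omega, by omega, hn⟩

section LocalTime

variable {α : Type*} [DecidableEq α]

def maxLocalTime (g : ℕ → α) (n : ℕ) : ℕ :=
  ((range n).image g).sup fun y => #{k ∈ range n | g k = y}

lemma card_filter_le_maxLocalTime (g : ℕ → α) (n : ℕ) (y : α) :
    #{k ∈ range n | g k = y} ≤ maxLocalTime g n := by
  obtain h | ⟨k, hk⟩ := ({k ∈ range n | g k = y} : Finset ℕ).eq_empty_or_nonempty
  · simp [h]
  · rw [mem_filter] at hk
    exact le_sup (f := fun y => #{k ∈ range n | g k = y}) (mem_image.2 ⟨k, hk.1, hk.2⟩)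

lemma maxLocalTime_le_iff {g : ℕ → α} {n m : ℕ} :
    maxLocalTime g n ≤ m ↔ ∀ y, #{k ∈ range n | g k = y} ≤ m :=
  ⟨fun h y => (card_filter_le_maxLocalTime g n y).trans h, fun h => Finset.sup_le fun y _ => h y⟩

@[simp]
lemma maxLocalTime_zero (g : ℕ → α) : maxLocalTime g 0 = 0 := by
  simp [maxLocalTime]

lemma maxLocalTime_congr {g g' : ℕ → α} {n : ℕ} (h : ∀ k < n, g k = g' k) :
    maxLocalTime g n = maxLocalTime g' n := by
  have hfilter (y : α) : {k ∈ range n | g k = y} = {k ∈ range n | g' k = y} :=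
    filter_congr fun k hk => by rw [h k (mem_range.1 hk)]
  refine le_antisymm (maxLocalTime_le_iff.2 fun y => ?_) (maxLocalTime_le_iff.2 fun y => ?_)
  · exact (hfilter y).symm ▸ card_filter_le_maxLocalTime g' n y
  · exact hfilter y ▸ card_filter_le_maxLocalTime g n y

lemma maxLocalTime_mono (g : ℕ → α) : Monotone (maxLocalTime g) := fun _ n hmn =>
  maxLocalTime_le_iff.2 fun y =>
    (card_le_card (filter_subset_filter _ (range_subset_range.2 hmn))).trans
      (card_filter_le_maxLocalTime g n y)

lemma maxLocalTime_succ_le (g : ℕ → α) (n : ℕ) : maxLocalTime g (n + 1) ≤ maxLocalTime g n + 1 :=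
  maxLocalTime_le_iff.2 fun y => by
    rw [range_add_one, filter_insert]
    split_ifs
    · exact (card_insert_le _ _).trans (Nat.add_le_add_right (card_filter_le_maxLocalTime g n y) 1)
    · exact (card_filter_le_maxLocalTime g n y).trans (Nat.le_succ _)

lemma maxLocalTime_le_add_shift [AddGroup α] (g : ℕ → α) {t n : ℕ} (h : t ≤ n) :
    maxLocalTime g n ≤ maxLocalTime g t + maxLocalTime (fun j => g (t + j) - g t) (n - t) := by
  obtain ⟨d, rfl⟩ := Nat.exists_eq_add_of_le h
  refine maxLocalTime_le_iff.2 fun y => ?_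
  rw [range_add, filter_union, Nat.add_sub_cancel_left]
  refine (card_union_le _ _).trans (Nat.add_le_add (card_filter_le_maxLocalTime g t y) ?_)
  rw [filter_map, card_map]
  simpa [Function.comp_def] using card_filter_le_maxLocalTime (fun j => g (t + j) - g t) d (y - g t)

end LocalTime

section Walk

variable {β : Type*} [AddCommGroup β]

def walk (x : ℕ → β) (k : ℕ) : β := ∑ i ∈ range k, x i

lemma walk_add_sub_walk (x : ℕ → β) (t j : ℕ) :
    walk x (t + j) - walk x t = walk (fun i => x (t + i)) j := by
  simp [walk, sum_range_add]

variable [DecidableEq β]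

lemma maxLocalTime_walk_le_add (x : ℕ → β) {t n : ℕ} (h : t ≤ n) :
    maxLocalTime (walk x) n ≤
      maxLocalTime (walk x) t + maxLocalTime (walk fun i => x (t + i)) (n - t) := by
  simpa only [walk_add_sub_walk] using maxLocalTime_le_add_shift (walk x) h

lemma maxLocalTime_walk_congr {x y : ℕ → β} {n : ℕ} (h : ∀ i < n, x i = y i) :
    maxLocalTime (walk x) n = maxLocalTime (walk y) n :=
  maxLocalTime_congr fun k hk => sum_congr rfl fun i hi => h i (by grind)

lemma exists_firstPassage_and_le_maxLocalTime_shift (x : ℕ → β) {a b n : ℕ} (ha : 0 < a)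
    (h : a + b ≤ maxLocalTime (walk x) n) :
    ∃ t < n, (maxLocalTime (walk x) t < a ∧ a ≤ maxLocalTime (walk x) (t + 1)) ∧
      b ≤ maxLocalTime (walk fun i => x (t + 1 + i)) (n - (t + 1)) := by
  obtain ⟨t, htn, hlt, hle⟩ := exists_lt_le_succ_of_le (f := (maxLocalTime (walk x) ·))
    (by simpa using ha) (le_of_add_le_left h)
  refine ⟨t, htn, ⟨hlt, hle⟩, ?_⟩
  have hjump := maxLocalTime_succ_le (walk x) t
  have hsplit := maxLocalTime_walk_le_add x (show t + 1 ≤ n by omega)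
  omega

lemma dependsOn_firstPassage (a t : ℕ) :
    DependsOn (fun x : ℕ → β => maxLocalTime (walk x) t < a ∧ a ≤ maxLocalTime (walk x) (t + 1))
      (range (t + 1)) := by
  intro x y hxy
  have h (m : ℕ) (hm : m ≤ t + 1) := maxLocalTime_walk_congr (n := m) fun i hi =>
    hxy i (by simp only [coe_range, Set.mem_Iio]; omega)
  simp only [h t (by omega), h (t + 1) le_rfl]

lemma dependsOn_le_maxLocalTime_walk_shift (b s m : ℕ) :
    DependsOn (fun x : ℕ → β => b ≤ maxLocalTime (walk fun i => x (s + i)) m) (Ico s (s + m)) :=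
  fun _ _ hxy => congrArg (b ≤ ·) (maxLocalTime_walk_congr fun i hi =>
    hxy _ (by simp only [coe_Ico, Set.mem_Ico]; omega))

end Walk

lemma measure_le_eq_sum_measure_firstPassage {Ω : Type*} [MeasurableSpace Ω] {μ : Measure Ω}
    {N : ℕ → Ω → ℕ} {a : ℕ} (hmono : ∀ ω, Monotone (N · ω)) (h0 : ∀ ω, N 0 ω < a)
    (hmeas : ∀ t, MeasurableSet {ω | N t ω < a ∧ a ≤ N (t + 1) ω}) (n : ℕ) :
    μ {ω | a ≤ N n ω} = ∑ t ∈ range n, μ {ω | N t ω < a ∧ a ≤ N (t + 1) ω} := by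
  have hdisj : Pairwise (Function.onFun Disjoint fun t => {ω | N t ω < a ∧ a ≤ N (t + 1) ω}) :=
    (pairwise_disjoint_on _).2 fun t t' htt' => Set.disjoint_left.2 fun ω ⟨_, hle⟩ ⟨hlt', _⟩ =>
      (hle.trans (hmono ω htt')).not_gt hlt'
  rw [← measure_biUnion_finset (hdisj.set_pairwise _) fun t _ => hmeas t]
  congr 1
  ext ω
  simp only [Set.mem_ofPred_eq, Set.mem_iUnion, mem_range, exists_prop]
  refine ⟨exists_lt_le_succ_of_le (f := (N · ω)) (h0 ω), ?_⟩
  rintro ⟨t, htn, -, hle⟩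
  exact hle.trans (hmono ω htn)

section IID

variable {Ω β : Type*} [MeasurableSpace Ω] {μ : Measure Ω} [AddCommGroup β] [DecidableEq β]
  [MeasurableSpace β] [Countable β] [MeasurableSingletonClass β] {X : ℕ → Ω → β}

lemma measure_le_maxLocalTime_walk_shift (hX : ∀ i, Measurable (X i)) (hindep : iIndepFun X μ)
    (hident : ∀ i, IdentDistrib (X i) (X 0) μ μ) (s m b : ℕ) :
    μ {ω | b ≤ maxLocalTime (walk fun i => X (s + i) ω) m} =
      μ {ω | b ≤ maxLocalTime (walk (X · ω)) m} :=
  hindep.measure_setOf_comp_eq hX (add_right_injective s)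
    (fun i => (hident _).trans (hident i).symm) (I := range m)
    fun _ _ hxy => congrArg (b ≤ ·) (maxLocalTime_walk_congr fun i hi => hxy i (by simpa))

theorem measure_le_maxLocalTime_walk_add_le_mul (hX : ∀ i, Measurable (X i))
    (hindep : iIndepFun X μ) (hident : ∀ i, IdentDistrib (X i) (X 0) μ μ) (n a b : ℕ) :
    μ {ω | a + b ≤ maxLocalTime (walk (X · ω)) n} ≤
      μ {ω | a ≤ maxLocalTime (walk (X · ω)) n} * μ {ω | b ≤ maxLocalTime (walk (X · ω)) n} := by
  have := hindep.isProbabilityMeasure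
  obtain rfl | ha := Nat.eq_zero_or_pos a
  · simp
  set N : ℕ → Ω → ℕ := fun m ω => maxLocalTime (walk (X · ω)) m
  -- `E t = {τ = t + 1}`, and `F t` is the event `b ≤ N*_{n-τ} ∘ θ_τ` on it.
  set E : ℕ → Set Ω := fun t => {ω | N t ω < a ∧ a ≤ N (t + 1) ω}
  set F : ℕ → Set Ω := fun t =>
    {ω | b ≤ maxLocalTime (walk fun i => X (t + 1 + i) ω) (n - (t + 1))}
  have hEF (t : ℕ) : μ (E t ∩ F t) = μ (E t) * μ (F t) :=
    hindep.measure_inter_setOf_eq_mul hX (dependsOn_firstPassage a t)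
      (dependsOn_le_maxLocalTime_walk_shift b (t + 1) (n - (t + 1)))
      (by rw [range_eq_Ico]; exact Ico_disjoint_Ico_consecutive _ _ _)
  have hF (t : ℕ) : μ (F t) ≤ μ {ω | b ≤ N n ω} := by
    rw [measure_le_maxLocalTime_walk_shift hX hindep hident]
    exact measure_mono fun ω hω => hω.trans (maxLocalTime_mono _ (Nat.sub_le _ _))
  calc μ {ω | a + b ≤ N n ω}
      ≤ μ (⋃ t ∈ range n, E t ∩ F t) := measure_mono fun ω hω => by
        obtain ⟨t, htn, hEt, hFt⟩ := exists_firstPassage_and_le_maxLocalTime_shift (X · ω) ha hω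
        exact Set.mem_biUnion (mem_range.2 htn) ⟨hEt, hFt⟩
    _ ≤ ∑ t ∈ range n, μ (E t ∩ F t) := measure_biUnion_finset_le _ _
    _ = ∑ t ∈ range n, μ (E t) * μ (F t) := sum_congr rfl fun t _ => hEF t
    _ ≤ ∑ t ∈ range n, μ (E t) * μ {ω | b ≤ N n ω} :=
        sum_le_sum fun t _ => mul_le_mul_right (hF t) _
    _ = μ {ω | a ≤ N n ω} * μ {ω | b ≤ N n ω} := by
        rw [← sum_mul, measure_le_eq_sum_measure_firstPassage (fun ω => maxLocalTime_mono _)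
          (fun ω => by simpa using ha)
          (fun t => (dependsOn_firstPassage a t).measurableSet_setOf_comp hX)]

end IID

end RandomWalk

theorem maximal_local_time_tail_submultiplicative_general
    {Ω : Type*} [MeasurableSpace Ω] (μ : Measure Ω)
    (X : ℕ → Ω → ℤ) (hmeas : ∀ i, Measurable (X i))
    (hindep : iIndepFun X μ)
    (hident : ∀ i, IdentDistrib (X i) (X 0) μ μ)
    (S : ℕ → Ω → ℤ) (hS : ∀ k ω, S k ω = ∑ i ∈ Finset.range k, X i ω)
    (Nstar : ℕ → Ω → ℕ)
    (hNstar : ∀ n ω, Nstar n ω =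
      ((Finset.range n).image (fun k => S k ω)).sup
        (fun y => ((Finset.range n).filter (fun k => S k ω = y)).card))
    (n : ℕ) (a b : ℕ) :
    μ {ω | a + b ≤ Nstar n ω} ≤ μ {ω | a ≤ Nstar n ω} * μ {ω | b ≤ Nstar n ω} := by
  have hN (m : ℕ) (ω : Ω) : Nstar m ω = RandomWalk.maxLocalTime (RandomWalk.walk (X · ω)) m := by
    rw [hNstar, show RandomWalk.walk (X · ω) = (S · ω) from funext fun k => (hS k ω).symm]
    rfl
  simp only [hN]
  exact RandomWalk.measure_le_maxLocalTime_walk_add_le_mul hmeas hindep hident n a b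

/-- Submultiplicativity of the tail of the maximal local time of a random walk:
`ℙ(N_n^* ≥ a + b) ≤ ℙ(N_n^* ≥ a) ⬝ ℙ(N_n^* ≥ b)`. -/
theorem maximal_local_time_tail_submultiplicative
    {Ω : Type*} [MeasurableSpace Ω] (μ : Measure Ω) [IsProbabilityMeasure μ]
    (X : ℕ → Ω → ℤ) (hmeas : ∀ i, Measurable (X i))
    (hindep : iIndepFun X μ)
    (hident : ∀ i, IdentDistrib (X i) (X 0) μ μ)
    (S : ℕ → Ω → ℤ) (hS : ∀ k ω, S k ω = ∑ i ∈ Finset.range k, X i ω)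
    (Nstar : ℕ → Ω → ℕ)
    (hNstar : ∀ n ω, Nstar n ω =
      ((Finset.range n).image (fun k => S k ω)).sup
        (fun y => ((Finset.range n).filter (fun k => S k ω = y)).card))
    (n : ℕ) (a b : ℕ) :
    μ {ω | a + b ≤ Nstar n ω} ≤ μ {ω | a ≤ Nstar n ω} * μ {ω | b ≤ Nstar n ω} :=
  maximal_local_time_tail_submultiplicative_general μ X hmeas hindep hident S hS Nstar hNstar n a b
end

section
/- Let Z be a ℤ-valued random variable equal to ∑_y ξ_y N(y) where (ξ_y) are i.i.d. ℤ-valued with characteristic function φ_ξ and {u : |φ_ξ(u)| = 1} = (2π/d)ℤ, N: ℤ → ℕ finitely supported with ∑_y N(y) = n. Fix x ∈ ℤ. If ℙ(nξ_1 − x ∉ dℤ) = 1 then ℙ(Z = x) = 0; if ℙ(nξ_1 − x ∈ dℤ) = 1 then ℙ(Z = x) = (d/2π) ∫_{−π/d}^{π/d} e^{−itx} ∏_y φ_ξ(t N(y)) dt. -/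
/-!
Since `‖φ(2π/d)‖ = 1` and `ℂ` is strictly convex, the unimodular variable `exp(2πi ξ₀/d)`, whose
mean is unimodular, is a.s. constant: `ξ₀` lies a.s. in a single class `c` mod `d`, hence by
identical distribution so does every `ξ_y`, and `Z ≡ nc ≡ nξ₀ (mod d)` a.s. This settles the first
case. In the second, `W = Z - x` is a.s. divisible by `d`, so `t ↦ 𝔼 exp(itW)` is
`2π/d`-periodic. Fubini and `∫_{-π}^{π} exp(itm) dt = 2π·1_{m = 0}` give
`2π ℙ(W = 0) = ∫_{-π}^{π} 𝔼 exp(itW) dt`, periodicity folds this into `d` times the integral over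
one period, and independence factors `𝔼 exp(itZ)` into `∏_y φ(t N(y))`.
-/

open MeasureTheory ProbabilityTheory Complex Real

lemma exp_two_pi_div_mul_I_eq_one_iff {d : ℕ} (hd : d ≠ 0) (m : ℤ) :
    cexp (↑(2 * π / d * m) * I) = 1 ↔ (d : ℤ) ∣ m := by
  rw [← (isPrimitiveRoot_exp d hd).zpow_eq_one_iff_dvd, ← exp_int_mul]
  congr! 2
  push_cast
  ring

lemma intervalIntegral_exp_int_mul_I (m : ℤ) :
    ∫ t in -π..π, cexp (↑(t * m) * I) = if m = 0 then 2 * (π : ℂ) else 0 := by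
  split_ifs with hm
  · simp [hm]
    ring
  have hm' : (m : ℝ) ≠ 0 := by exact_mod_cast hm
  have := intervalIntegral.integral_comp_mul_right (fun s : ℝ => cexp (s * I)) hm'
    (a := -π) (b := π)
  simp only [ofReal_mul] at this ⊢
  rw [this, neg_mul, integral_exp_mul_I_eq_sin, mul_comm π, Real.sin_int_mul_pi]
  simp

lemma Function.Periodic.intervalIntegral_neg_pi_pi_eq_nsmul {E : Type*} [NormedAddCommGroup E]
    [NormedSpace ℝ E] {f : ℝ → E} {d : ℕ} (hd : d ≠ 0) (hf : Function.Periodic f (2 * π / d))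
    (hint : ∀ a b, IntervalIntegrable f volume a b) :
    ∫ t in -π..π, f t = d • ∫ t in -(π / d)..π / d, f t := by
  have hfold : -π + (d : ℤ) • (2 * π / d) = π := by
    rw [zsmul_eq_mul]
    push_cast
    field_simp
    ring
  have hshift : -(π / d) + 2 * π / d = π / d := by ring
  have := hf.intervalIntegral_add_zsmul_eq d (-π) hint
  rw [hfold] at this
  rw [this, hf.intervalIntegral_add_eq _ (-(π / d)), hshift, natCast_zsmul]

lemma dvd_sum_mul_sub_mul_sum {ι R : Type*} [CommRing R] {s : Finset ι} {a : ι → R} {b d : R}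
    (h : ∀ i ∈ s, d ∣ a i - b) (w : ι → R) : d ∣ ∑ i ∈ s, a i * w i - b * ∑ i ∈ s, w i := by
  rw [Finset.mul_sum, ← Finset.sum_sub_distrib]
  exact Finset.dvd_sum fun i hi => by rw [← sub_mul]; exact (h i hi).mul_right (w i)

section

variable {Ω : Type*} [MeasurableSpace Ω] {μ : Measure Ω} {W : Ω → ℤ}

lemma integrable_exp_mul_I_prod [IsFiniteMeasure μ] (ν : Measure ℝ) [IsFiniteMeasure ν]
    (hW : Measurable W) :
    Integrable (fun p : ℝ × Ω => cexp (↑(p.1 * W p.2) * I)) (ν.prod μ) :=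
  (integrable_const (1 : ℝ)).mono' (Measurable.aestronglyMeasurable (by fun_prop))
    (ae_of_all _ fun _ => (norm_exp_ofReal_mul_I _).le)

lemma intervalIntegrable_integral_exp_mul_I [IsFiniteMeasure μ] (hW : Measurable W) (a b : ℝ) :
    IntervalIntegrable (fun t => ∫ ω, cexp (↑(t * W ω) * I) ∂μ) volume a b :=
  ⟨(integrable_exp_mul_I_prod _ hW).integral_prod_left,
    (integrable_exp_mul_I_prod _ hW).integral_prod_left⟩

lemma intervalIntegral_integral_exp_mul_I [IsFiniteMeasure μ] (hW : Measurable W) :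
    ∫ t in -π..π, ∫ ω, cexp (↑(t * W ω) * I) ∂μ = 2 * π * (μ {ω | W ω = 0}).toReal := by
  have hπ := neg_le_self pi_pos.le
  rw [intervalIntegral.integral_of_le hπ,
    integral_integral_swap (integrable_exp_mul_I_prod _ hW)]
  simp_rw [← intervalIntegral.integral_of_le hπ, intervalIntegral_exp_int_mul_I]
  have hs : MeasurableSet {ω | W ω = 0} := hW (measurableSet_singleton 0)
  convert integral_indicator_const (2 * (π : ℂ)) hs (μ := μ) using 1
  · congr with ω
    simp [Set.indicator_apply]
  · rw [Complex.real_smul, measureReal_def, mul_comm]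

lemma periodic_integral_exp_mul_I {d : ℕ} (hd : d ≠ 0) (hW : ∀ᵐ ω ∂μ, (d : ℤ) ∣ W ω) :
    Function.Periodic (fun t : ℝ => ∫ ω, cexp (↑(t * W ω) * I) ∂μ) (2 * π / d) := fun t => by
  refine integral_congr_ae ?_
  filter_upwards [hW] with ω hω
  rw [add_mul, ofReal_add, add_mul, Complex.exp_add, (exp_two_pi_div_mul_I_eq_one_iff hd _).2 hω,
    mul_one]

lemma two_pi_mul_measure_setOf_eq_zero_of_ae_dvd [IsFiniteMeasure μ] {d : ℕ} (hd : d ≠ 0)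
    (hW : Measurable W) (hWd : ∀ᵐ ω ∂μ, (d : ℤ) ∣ W ω) :
    2 * π * (μ {ω | W ω = 0}).toReal =
      d * ∫ t in -(π / d)..π / d, ∫ ω, cexp (↑(t * W ω) * I) ∂μ := by
  rw [← intervalIntegral_integral_exp_mul_I hW,
    (periodic_integral_exp_mul_I hd hWd).intervalIntegral_neg_pi_pi_eq_nsmul hd
      (intervalIntegrable_integral_exp_mul_I hW), nsmul_eq_mul]

lemma measure_setOf_eq_of_ae_dvd_sub [IsFiniteMeasure μ] {Z : Ω → ℤ} {d : ℕ} {x : ℤ} (hd : d ≠ 0)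
    (hZ : Measurable Z) (hZx : ∀ᵐ ω ∂μ, (d : ℤ) ∣ Z ω - x) :
    ((μ {ω | Z ω = x}).toReal : ℂ) = d / (2 * π) * ∫ t in Set.Ioc (-(π / d)) (π / d),
      cexp (↑(-(t * x)) * I) * ∫ ω, cexp (↑(t * Z ω) * I) ∂μ := by
  have hmerge : ∀ t : ℝ, cexp (↑(-(t * x)) * I) * ∫ ω, cexp (↑(t * Z ω) * I) ∂μ =
      ∫ ω, cexp (↑(t * ↑(Z ω - x)) * I) ∂μ := fun t => by
    rw [← integral_const_mul]
    congr with ω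
    rw [← Complex.exp_add]
    push_cast
    ring_nf
  have hinv := two_pi_mul_measure_setOf_eq_zero_of_ae_dvd hd (hZ.sub_const x) hZx
  simp_rw [sub_eq_zero] at hinv
  have hπd : -(π / d) ≤ π / d := neg_le_self (by positivity)
  rw [← intervalIntegral.integral_of_le hπd]
  simp_rw [hmerge]
  rw [div_mul_eq_mul_div, ← hinv]
  field_simp

lemma exists_ae_dvd_sub_of_norm_integral_exp_eq_one [IsProbabilityMeasure μ] {X : Ω → ℤ} {d : ℕ}
    (hd : d ≠ 0) (h : ‖∫ ω, cexp (↑(2 * π / d * X ω) * I) ∂μ‖ = 1) :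
    ∃ c : ℤ, ∀ᵐ ω ∂μ, (d : ℤ) ∣ X ω - c := by
  obtain hconst | hlt := ae_eq_const_or_norm_integral_lt_of_norm_le_const (C := 1)
    (ae_of_all μ fun ω => (norm_exp_ofReal_mul_I (2 * π / d * X ω)).le)
  · obtain ⟨ω₀, hω₀⟩ := hconst.exists
    refine ⟨X ω₀, ?_⟩
    filter_upwards [hconst] with ω hω
    rw [← exp_two_pi_div_mul_I_eq_one_iff hd, Int.cast_sub, mul_sub, ofReal_sub, sub_mul,
      Complex.exp_sub, div_eq_one_iff_eq (Complex.exp_ne_zero _)]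
    exact hω.trans hω₀.symm
  · rw [probReal_univ, mul_one] at hlt
    exact absurd h hlt.ne

lemma ae_dvd_sum_mul_sub_of_identDistrib [IsProbabilityMeasure μ] {ι : Type*} [Countable ι]
    {ξ : ι → Ω → ℤ} {i₀ : ι} (hident : ∀ i, IdentDistrib (ξ i) (ξ i₀) μ μ) {d : ℕ} (hd : d ≠ 0)
    (hunit : ‖∫ ω, cexp (↑(2 * π / d * ξ i₀ ω) * I) ∂μ‖ = 1) (s : Finset ι) (w : ι → ℤ) :
    ∀ᵐ ω ∂μ, (d : ℤ) ∣ ∑ i ∈ s, ξ i ω * w i - (∑ i ∈ s, w i) * ξ i₀ ω := by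
  obtain ⟨c, hc⟩ := exists_ae_dvd_sub_of_norm_integral_exp_eq_one hd hunit
  have hall : ∀ᵐ ω ∂μ, ∀ i, (d : ℤ) ∣ ξ i ω - c :=
    ae_all_iff.2 fun i => (hident i).symm.ae_snd (p := fun z => (d : ℤ) ∣ z - c) .of_discrete hc
  filter_upwards [hall] with ω hω
  have := dvd_sub (dvd_sum_mul_sub_mul_sum (s := s) (fun i _ => hω i) w)
    ((hω i₀).mul_left (∑ i ∈ s, w i))
  rwa [show ∑ i ∈ s, ξ i ω * w i - c * ∑ i ∈ s, w i - (∑ i ∈ s, w i) * (ξ i₀ ω - c) =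
    ∑ i ∈ s, ξ i ω * w i - (∑ i ∈ s, w i) * ξ i₀ ω by ring] at this

lemma ProbabilityTheory.iIndepFun.integral_finset_prod_comp {ι 𝓧 𝕜 : Type*} [RCLike 𝕜]
    [MeasurableSpace 𝓧] {X : ι → Ω → 𝓧} (hX : iIndepFun X μ) (mX : ∀ i, Measurable (X i))
    {f : ι → 𝓧 → 𝕜} (hf : ∀ i, Measurable (f i)) (s : Finset ι) :
    ∫ ω, ∏ i ∈ s, f i (X i ω) ∂μ = ∏ i ∈ s, ∫ ω, f i (X i ω) ∂μ := by
  simp_rw [← s.prod_coe_sort]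
  exact (hX.precomp Subtype.val_injective).integral_fun_prod_comp (fun i => (mX i).aemeasurable)
    (fun i => (hf i).aestronglyMeasurable)

lemma ProbabilityTheory.iIndepFun.integral_exp_mul_sum_mul {ι : Type*} {ξ : ι → Ω → ℤ}
    (hξ : iIndepFun ξ μ) (mξ : ∀ i, Measurable (ξ i)) (s : Finset ι) (w : ι → ℤ) (t : ℝ) :
    ∫ ω, cexp (↑(t * ↑(∑ i ∈ s, ξ i ω * w i)) * I) ∂μ =
      ∏ i ∈ s, ∫ ω, cexp (↑(t * w i * ξ i ω) * I) ∂μ := by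
  rw [← hξ.integral_finset_prod_comp mξ (f := fun i z => cexp (↑(t * w i * z) * I))
    (fun _ => .of_discrete)]
  congr with ω
  rw [← Complex.exp_sum, ← Finset.sum_mul]
  push_cast
  rw [Finset.mul_sum]
  congr! 3 with i
  ring

lemma ProbabilityTheory.iIndepFun.integral_exp_mul_sum_mul_of_identDistrib {ι : Type*}
    {ξ : ι → Ω → ℤ} (hξ : iIndepFun ξ μ) (mξ : ∀ i, Measurable (ξ i)) {i₀ : ι}
    (hident : ∀ i, IdentDistrib (ξ i) (ξ i₀) μ μ) (s : Finset ι) (w : ι → ℤ) (t : ℝ) :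
    ∫ ω, cexp (↑(t * ↑(∑ i ∈ s, ξ i ω * w i)) * I) ∂μ =
      ∏ i ∈ s, ∫ ω, cexp (↑(t * w i * ξ i₀ ω) * I) ∂μ := by
  rw [hξ.integral_exp_mul_sum_mul mξ]
  exact Finset.prod_congr rfl fun i _ =>
    ((hident i).comp (u := fun z : ℤ => cexp (((t * w i * z : ℝ) : ℂ) * I))
      .of_discrete).integral_eq


end

/-- Fourier inversion identity for `Z = ∑_y ξ_y N(y)` with i.i.d. lattice
scenery `ξ`: if a.s. `nξ_1 - x ∉ dℤ` then `ℙ(Z = x) = 0`; if a.s.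
`nξ_1 - x ∈ dℤ` then
`ℙ(Z = x) = (d/2π) ∫_{-π/d}^{π/d} e^{-itx} ∏_y φ_ξ(t N(y)) dt`. -/
theorem rwrs_fourier_inversion
    {Ω : Type*} [MeasurableSpace Ω] (μ : Measure Ω) [IsProbabilityMeasure μ]
    (ξ : ℤ → Ω → ℤ) (hmeas : ∀ y, Measurable (ξ y))
    (hindep : iIndepFun ξ μ)
    (hident : ∀ y, IdentDistrib (ξ y) (ξ 0) μ μ)
    (φ : ℝ → ℂ)
    (hφ : ∀ u : ℝ, φ u = ∫ ω, Complex.exp ((u * (ξ 0 ω : ℝ) : ℝ) * Complex.I) ∂μ)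
    (d : ℕ) (hd : 1 ≤ d)
    (hlat : {u : ℝ | ‖φ u‖ = 1} = {u : ℝ | ∃ k : ℤ, u = 2 * Real.pi * k / d})
    (N : ℤ →₀ ℕ) (n : ℕ) (hn : ∑ y ∈ N.support, N y = n)
    (Z : Ω → ℤ) (hZ : ∀ ω, Z ω = ∑ y ∈ N.support, ξ y ω * (N y : ℤ))
    (x : ℤ) :
    ((∀ᵐ ω ∂μ, ¬ ((d : ℤ) ∣ ((n : ℤ) * ξ 0 ω - x))) → μ {ω | Z ω = x} = 0) ∧
    ((∀ᵐ ω ∂μ, (d : ℤ) ∣ ((n : ℤ) * ξ 0 ω - x)) →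
      ((μ {ω | Z ω = x}).toReal : ℂ) =
        ((d : ℂ) / (2 * (Real.pi : ℂ))) *
          ∫ t in Set.Ioc (-(Real.pi / d)) (Real.pi / d),
            Complex.exp ((-(t * (x : ℝ)) : ℝ) * Complex.I) *
              ∏ y ∈ N.support, φ (t * (N y : ℝ))) := by
  have hd0 : d ≠ 0 := Nat.one_le_iff_ne_zero.mp hd
  have hZm : Measurable Z := by
    rw [show Z = _ from funext hZ]
    fun_prop
  have hZξ : ∀ᵐ ω ∂μ, (d : ℤ) ∣ Z ω - n * ξ 0 ω := by
    have hunit : ‖∫ ω, cexp (↑(2 * π / d * ξ 0 ω) * I) ∂μ‖ = 1 := by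
      rw [← hφ]
      exact (Set.ext_iff.1 hlat _).2 ⟨1, by push_cast; ring⟩
    simpa [← hZ, ← hn] using ae_dvd_sum_mul_sub_of_identDistrib hident hd0 hunit N.support (N ·)
  refine ⟨fun h => measure_eq_zero_iff_ae_notMem.2 ?_, fun h => ?_⟩
  · filter_upwards [hZξ, h] with ω hZω hξω hZx
    exact hξω (dvd_sub_comm.1 (hZx ▸ hZω))
  · have hcharFun (t : ℝ) : ∫ ω, cexp (↑(t * Z ω) * I) ∂μ = ∏ y ∈ N.support, φ (t * N y) := by
      simp_rw [hZ, hindep.integral_exp_mul_sum_mul_of_identDistrib hmeas hident, hφ,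
        Int.cast_natCast]
    rw [measure_setOf_eq_of_ae_dvd_sub hd0 hZm
      (by filter_upwards [hZξ, h] with ω h₁ h₂ using by simpa using dvd_add h₁ h₂)]
    simp_rw [hcharFun]
end
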